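/- arXiv:1708.00780 — 5 statements merged into one kernel-verified Lean document; each statement's English description precedes it below -/
import Mathlib

section
/- Let c be a real n×n matrix. Then max over permutations σ of ∑_i c_{i,σ(i)} equals min over pairs of vectors (a,b) ∈ ℝ^n × ℝ^n satisfying a_i + b_j ≥ c_{ij} for all i,j, of ∑_i a_i + ∑_j b_j. -/
/-!
Weak duality is the rearrangement `∑ c i (σ i) ≤ ∑ (a i + b (σ i)) = ∑ a + ∑ b`.

For the converse take a potential of least sum. It exists by compactness: for fixed
column part `b` the best row part is `a i = max_j (c i j - b j)`, and the resulting
objective is continuous in `b` and invariant under shifting `b` by a constant, so it may be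
minimised over a box. At a minimal potential the tight edges `a i + b j = c i j` satisfy
Hall's condition: if a set `s` of rows had fewer tight neighbours `N`, lowering `a` on `s`
and raising `b` on `N` by a small `ε` would give a cheaper potential. A perfect matching of
tight edges is a transversal whose sum equals that of the potential.
-/

open Finset Filter Topology

namespace Matrix

variable {ι : Type*} [Fintype ι]

def IsPotential (c : Matrix ι ι ℝ) (a b : ι → ℝ) : Prop :=
  ∀ i j, c i j ≤ a i + b j

lemma sum_add_apply_perm (a b : ι → ℝ) (σ : Equiv.Perm ι) :
    ∑ i, (a i + b (σ i)) = ∑ i, a i + ∑ j, b j := by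
  rw [sum_add_distrib, Equiv.sum_comp σ b]

variable {c : Matrix ι ι ℝ} {a b : ι → ℝ}

lemma IsPotential.sum_apply_perm_le (h : c.IsPotential a b) (σ : Equiv.Perm ι) :
    ∑ i, c i (σ i) ≤ ∑ i, a i + ∑ j, b j :=
  (sum_add_apply_perm a b σ) ▸ sum_le_sum fun i _ => h i (σ i)

lemma sum_apply_perm_eq_of_tight {σ : Equiv.Perm ι} (hσ : ∀ i, c i (σ i) = a i + b (σ i)) :
    ∑ i, c i (σ i) = ∑ i, a i + ∑ j, b j := by
  rw [← sum_add_apply_perm a b σ]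
  exact sum_congr rfl fun i _ => hσ i

section LeastRowPotential

variable [Nonempty ι]

noncomputable def leastRowPotential (c : Matrix ι ι ℝ) (b : ι → ℝ) (i : ι) : ℝ :=
  univ.sup' univ_nonempty fun j => c i j - b j

noncomputable def dualObjective (c : Matrix ι ι ℝ) (b : ι → ℝ) : ℝ :=
  ∑ i, c.leastRowPotential b i + ∑ j, b j

lemma isPotential_leastRowPotential (c : Matrix ι ι ℝ) (b : ι → ℝ) :
    c.IsPotential (c.leastRowPotential b) b := fun i j => by
  have := le_sup' (fun j => c i j - b j) (mem_univ j)
  rw [leastRowPotential]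
  linarith

lemma IsPotential.leastRowPotential_le (h : c.IsPotential a b) (i : ι) :
    c.leastRowPotential b i ≤ a i :=
  sup'_le _ _ fun j _ => sub_le_iff_le_add.2 (h i j)

lemma IsPotential.dualObjective_le (h : c.IsPotential a b) :
    c.dualObjective b ≤ ∑ i, a i + ∑ j, b j :=
  add_le_add_left (sum_le_sum fun i _ => h.leastRowPotential_le i) _

lemma continuous_dualObjective (c : Matrix ι ι ℝ) : Continuous c.dualObjective := by
  unfold dualObjective leastRowPotential
  fun_prop

lemma leastRowPotential_sub_const (c : Matrix ι ι ℝ) (b : ι → ℝ) (t : ℝ) (i : ι) :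
    c.leastRowPotential (fun j => b j - t) i = c.leastRowPotential b i + t := by
  simp only [leastRowPotential, sup'_add, sub_sub_eq_add_sub, add_sub_right_comm]

lemma dualObjective_sub_const (c : Matrix ι ι ℝ) (b : ι → ℝ) (t : ℝ) :
    c.dualObjective (fun j => b j - t) = c.dualObjective b := by
  simp only [dualObjective, leastRowPotential_sub_const, sum_add_distrib, sum_sub_distrib]
  ring

lemma sum_add_le_dualObjective {b : ι → ℝ} (hb : 0 ≤ b) {j₀ : ι} (hj₀ : b j₀ = 0) (j : ι) :
    ∑ i, c i j₀ + b j ≤ c.dualObjective b := by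
  refine add_le_add (sum_le_sum fun i _ => ?_) (single_le_sum (fun k _ => hb k) (mem_univ j))
  simpa [hj₀] using (c.isPotential_leastRowPotential b) i j₀

lemma exists_forall_dualObjective_le (c : Matrix ι ι ℝ) :
    ∃ b, ∀ b', c.dualObjective b ≤ c.dualObjective b' := by
  obtain ⟨j₀, -, hj₀⟩ := exists_mem_eq_inf' univ_nonempty fun j => ∑ i, c i j
  set R := c.dualObjective 0 - ∑ i, c i j₀
  have hR : 0 ≤ R := sub_nonneg.2 (by simpa using sum_add_le_dualObjective (c := c) le_rfl rfl j₀)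
  obtain ⟨b, -, hb⟩ := (isCompact_Icc (a := 0) (b := fun _ => R)).exists_isMinOn
    ⟨0, le_rfl, fun _ => hR⟩ (c.continuous_dualObjective.continuousOn)
  refine ⟨b, fun b' => ?_⟩
  obtain ⟨k, -, hk⟩ := exists_mem_eq_inf' univ_nonempty b'
  -- By shift invariance we may assume `b' ≥ 0` with `b' k = 0`.
  rw [← c.dualObjective_sub_const b' (b' k)]
  set b'' := fun j => b' j - b' k
  have hb''_nonneg : 0 ≤ b'' := fun j => sub_nonneg.2 (hk ▸ inf'_le _ (mem_univ j))
  by_cases hbox : b'' ≤ fun _ => R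
  · exact hb ⟨hb''_nonneg, hbox⟩
  obtain ⟨j, hj⟩ : ∃ j, R < b'' j := by simpa [Pi.le_def] using hbox
  calc c.dualObjective b ≤ c.dualObjective 0 := hb ⟨le_rfl, fun _ => hR⟩
    _ = ∑ i, c i j₀ + R := by ring
    _ ≤ ∑ i, c i k + b'' j := add_le_add (hj₀ ▸ inf'_le _ (mem_univ k)) hj.le
    _ ≤ c.dualObjective b'' := sum_add_le_dualObjective hb''_nonneg (sub_self _) j

end LeastRowPotential

lemma exists_isPotential_forall_sum_le (c : Matrix ι ι ℝ) :
    ∃ a b, c.IsPotential a b ∧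
      ∀ a' b', c.IsPotential a' b' → ∑ i, a i + ∑ j, b j ≤ ∑ i, a' i + ∑ j, b' j := by
  cases isEmpty_or_nonempty ι
  · exact ⟨0, 0, isEmptyElim, by simp⟩
  obtain ⟨b, hb⟩ := c.exists_forall_dualObjective_le
  exact ⟨c.leastRowPotential b, b, c.isPotential_leastRowPotential b,
    fun a' b' h => (hb b').trans h.dualObjective_le⟩

noncomputable def tightCols (c : Matrix ι ι ℝ) (a b : ι → ℝ) (i : ι) : Finset ι :=
  {j | c i j = a i + b j}

lemma IsPotential.exists_sum_lt_of_card_lt [DecidableEq ι] (h : c.IsPotential a b)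
    {s : Finset ι} (hs : #(s.biUnion (c.tightCols a b)) < #s) :
    ∃ a' b', c.IsPotential a' b' ∧ ∑ i, a' i + ∑ j, b' j < ∑ i, a i + ∑ j, b j := by
  set N := s.biUnion (c.tightCols a b)
  have hslack : ∀ i ∈ s, ∀ j ∉ N, c i j < a i + b j := fun i hi j hj =>
    (h i j).lt_of_ne fun hij => hj (mem_biUnion.2 ⟨i, hi, by simp [tightCols, hij]⟩)
  obtain ⟨ε, hε, hεs⟩ : ∃ ε > 0, ∀ i ∈ s, ∀ j ∉ N, ε ≤ a i + b j - c i j := by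
    have : ∀ᶠ ε in 𝓝[>] (0 : ℝ), ∀ i ∈ s, ∀ j ∉ N, ε ≤ a i + b j - c i j := by
      simp only [eventually_all]
      exact fun i hi j hj =>
        nhdsWithin_le_nhds (eventually_le_nhds (by linarith [hslack i hi j hj]))
    exact (eventually_mem_nhdsWithin.and this).exists
  -- Lower `a` by `ε` on `s` and raise `b` by `ε` on its tight neighbourhood `N`.
  refine ⟨fun i => a i - if i ∈ s then ε else 0, fun j => b j + if j ∈ N then ε else 0,
    fun i j => ?_, ?_⟩
  · have := h i j
    dsimp only
    split_ifs with hi hj hj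
    · linarith
    · linarith [hεs i hi j hj]
    all_goals linarith
  · have : (#N : ℝ) * ε < #s * ε := mul_lt_mul_of_pos_right (by exact_mod_cast hs) hε
    simp only [sum_sub_distrib, sum_add_distrib, sum_ite_mem, univ_inter, sum_const,
      nsmul_eq_mul]
    linarith

lemma IsPotential.exists_perm_tight (h : c.IsPotential a b)
    (hmin : ∀ a' b', c.IsPotential a' b' → ∑ i, a i + ∑ j, b j ≤ ∑ i, a' i + ∑ j, b' j) :
    ∃ σ : Equiv.Perm ι, ∀ i, c i (σ i) = a i + b (σ i) := by
  classical
  have hall : ∀ s, #s ≤ #(s.biUnion (c.tightCols a b)) := fun s => not_lt.1 fun hs =>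
    let ⟨a', b', h', hlt⟩ := h.exists_sum_lt_of_card_lt hs
    (hmin a' b' h').not_gt hlt
  obtain ⟨f, hf, hft⟩ := (all_card_le_biUnion_card_iff_exists_injective _).1 hall
  exact ⟨Equiv.ofBijective f (Finite.injective_iff_bijective.1 hf), fun i => by
    simpa [tightCols] using hft i⟩

end Matrix

/-- **Kuhn–Munkres duality.** For a real `n × n` matrix `c`, the maximal sum of a
transversal equals the minimal sum `∑ a i + ∑ b j` of a potential, i.e. of vectors
`a, b` with `a i + b j ≥ c i j` for all `i, j`. -/
theorem kuhn_munkres {n : ℕ} (c : Matrix (Fin n) (Fin n) ℝ) :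
    ∃ m : ℝ,
      IsGreatest {s : ℝ | ∃ σ : Equiv.Perm (Fin n), s = ∑ i, c i (σ i)} m ∧
      IsLeast {s : ℝ | ∃ a b : Fin n → ℝ, (∀ i j, c i j ≤ a i + b j) ∧
        s = (∑ i, a i) + ∑ j, b j} m := by
  obtain ⟨a, b, hab, hmin⟩ := c.exists_isPotential_forall_sum_le
  obtain ⟨σ, hσ⟩ := hab.exists_perm_tight hmin
  refine ⟨∑ i, a i + ∑ j, b j, ⟨⟨σ, (Matrix.sum_apply_perm_eq_of_tight hσ).symm⟩, ?_⟩,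
    ⟨a, b, hab, rfl⟩, ?_⟩
  · rintro _ ⟨τ, rfl⟩
    exact hab.sum_apply_perm_le τ
  · rintro _ ⟨a', b', hab', rfl⟩
    exact hmin a' b' hab'
end

section
/- Let c be an integer n×n matrix. Then max over permutations σ of ∑_i c_{i,σ(i)} equals min over integer vectors a, b ∈ ℤ^n with a_i + b_j ≥ c_{ij} for all i,j, of ∑_i a_i + ∑_j b_j. -/
open Finset

namespace KMIntAux

variable {n : ℕ}

/-- tight edges from row `i`. -/
def tight (c : Matrix (Fin n) (Fin n) ℤ) (a b : Fin n → ℤ) (i : Fin n) : Finset (Fin n) :=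
  univ.filter fun j => a i + b j = c i j

lemma weak_dual (c : Matrix (Fin n) (Fin n) ℤ) {a b : Fin n → ℤ}
    (h : ∀ i j, c i j ≤ a i + b j) (σ : Equiv.Perm (Fin n)) :
    ∑ i, c i (σ i) ≤ (∑ i, a i) + ∑ j, b j := by
  calc ∑ i, c i (σ i) ≤ ∑ i, (a i + b (σ i)) := Finset.sum_le_sum fun i _ => h i (σ i)
    _ = (∑ i, a i) + ∑ i, b (σ i) := Finset.sum_add_distrib
    _ = (∑ i, a i) + ∑ j, b j := by rw [Equiv.sum_comp σ b]

lemma exists_opt (c : Matrix (Fin n) (Fin n) ℤ) (M : ℤ)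
    (hM : ∃ σ : Equiv.Perm (Fin n), M = ∑ i, c i (σ i))
    (hub : ∀ σ : Equiv.Perm (Fin n), ∑ i, c i (σ i) ≤ M)
    (k : ℕ) :
    ∀ a b : Fin n → ℤ, (∀ i j, c i j ≤ a i + b j) →
      ((∑ i, a i) + ∑ j, b j - M).toNat ≤ k →
      ∃ a' b' : Fin n → ℤ, (∀ i j, c i j ≤ a' i + b' j) ∧ (∑ i, a' i) + ∑ j, b' j = M := by
  induction k with
  | zero =>
    intro a b hfeas hk
    obtain ⟨σ, hσ⟩ := hM
    have h1 : M ≤ (∑ i, a i) + ∑ j, b j := hσ ▸ weak_dual c hfeas σ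
    have h2 : (∑ i, a i) + ∑ j, b j - M ≤ 0 := by omega
    exact ⟨a, b, hfeas, by omega⟩
  | succ k ih =>
    intro a b hfeas hk
    by_cases hall : ∀ S : Finset (Fin n), S.card ≤ (S.biUnion (tight c a b)).card
    · -- Hall: a perfect tight matching exists, so (a,b) is already optimal
      obtain ⟨f, hfinj, hf⟩ :=
        (Finset.all_card_le_biUnion_card_iff_exists_injective (tight c a b)).1 hall
      let σ : Equiv.Perm (Fin n) := Equiv.ofBijective f (Finite.injective_iff_bijective.mp hfinj)
      have hsum : ∑ i, c i (σ i) = (∑ i, a i) + ∑ j, b j := by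
        have : ∀ i, c i (σ i) = a i + b (σ i) := by
          intro i
          have := hf i
          simp only [tight, mem_filter] at this
          exact this.2.symm
        calc ∑ i, c i (σ i) = ∑ i, (a i + b (σ i)) := Finset.sum_congr rfl fun i _ => this i
          _ = (∑ i, a i) + ∑ i, b (σ i) := Finset.sum_add_distrib
          _ = (∑ i, a i) + ∑ j, b j := by rw [Equiv.sum_comp σ b]
      obtain ⟨σ₀, hσ₀⟩ := hM
      have h1 : M ≤ (∑ i, a i) + ∑ j, b j := hσ₀ ▸ weak_dual c hfeas σ₀
      have h2 : (∑ i, a i) + ∑ j, b j ≤ M := hsum ▸ hub σ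
      exact ⟨a, b, hfeas, le_antisymm h2 h1⟩
    · push_neg at hall
      obtain ⟨S, hS⟩ := hall
      set T := S.biUnion (tight c a b) with hT
      set a' : Fin n → ℤ := fun i => a i - (if i ∈ S then 1 else 0) with ha'
      set b' : Fin n → ℤ := fun j => b j + (if j ∈ T then 1 else 0) with hb'
      have hfeas' : ∀ i j, c i j ≤ a' i + b' j := by
        intro i j
        by_cases hi : i ∈ S
        · by_cases hj : j ∈ T
          · simp only [ha', hb', if_pos hi, if_pos hj]
            have := hfeas i j; omega
          · have hjt : j ∉ tight c a b i := fun h => hj (Finset.mem_biUnion.2 ⟨i, hi, h⟩)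
            simp only [tight, mem_filter, mem_univ, true_and] at hjt
            have := hfeas i j
            simp only [ha', hb', if_pos hi, if_neg hj]
            omega
        · have := hfeas i j
          simp only [ha', hb', if_neg hi]
          split <;> omega
      have hsa : ∑ i, a' i = (∑ i, a i) - S.card := by
        simp only [ha']
        rw [Finset.sum_sub_distrib, Finset.sum_ite_mem, Finset.univ_inter, Finset.sum_const]
        simp
      have hsb : ∑ j, b' j = (∑ j, b j) + T.card := by
        simp only [hb']
        rw [Finset.sum_add_distrib, Finset.sum_ite_mem, Finset.univ_inter, Finset.sum_const]
        simp
      have hcard : (T.card : ℤ) < S.card := by exact_mod_cast hS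
      obtain ⟨σ₀, hσ₀⟩ := hM
      have hge : M ≤ (∑ i, a' i) + ∑ j, b' j := hσ₀ ▸ weak_dual c hfeas' σ₀
      have hge0 : M ≤ (∑ i, a i) + ∑ j, b j := hσ₀ ▸ weak_dual c hfeas σ₀
      apply ih a' b' hfeas'
      rw [hsa, hsb]
      omega

end KMIntAux

/-- **Integral Kuhn–Munkres duality.** For an integer `n × n` matrix `c`, the maximal sum
of a transversal equals the minimal sum `∑ a i + ∑ b j` over integer potentials, i.e.
integer vectors `a, b` with `a i + b j ≥ c i j` for all `i, j`. -/
theorem kuhn_munkres_int {n : ℕ} (c : Matrix (Fin n) (Fin n) ℤ) :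
    ∃ m : ℤ,
      IsGreatest {s : ℤ | ∃ σ : Equiv.Perm (Fin n), s = ∑ i, c i (σ i)} m ∧
      IsLeast {s : ℤ | ∃ a b : Fin n → ℤ, (∀ i j, c i j ≤ a i + b j) ∧
        s = (∑ i, a i) + ∑ j, b j} m := by
  classical
  set P : Finset ℤ := (Finset.univ : Finset (Equiv.Perm (Fin n))).image
      (fun σ => ∑ i, c i (σ i)) with hP
  have hPne : P.Nonempty := ⟨∑ i, c i ((1 : Equiv.Perm (Fin n)) i),
    Finset.mem_image.2 ⟨1, Finset.mem_univ _, rfl⟩⟩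
  set M := P.max' hPne with hMdef
  have hMmem : ∃ σ : Equiv.Perm (Fin n), M = ∑ i, c i (σ i) := by
    obtain ⟨σ, _, hσ⟩ := Finset.mem_image.1 (P.max'_mem hPne)
    exact ⟨σ, hσ.symm⟩
  have hub : ∀ σ : Equiv.Perm (Fin n), ∑ i, c i (σ i) ≤ M := fun σ =>
    Finset.le_max' P _ (Finset.mem_image.2 ⟨σ, Finset.mem_univ _, rfl⟩)
  refine ⟨M, ⟨hMmem, ?_⟩, ?_, ?_⟩
  · rintro s ⟨σ, rfl⟩
    exact hub σ
  · -- M is attained by an optimal potential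
    set a : Fin n → ℤ := fun i => ((Finset.univ.sup fun j' => (c i j').toNat : ℕ) : ℤ) with ha
    have hfeas : ∀ i j, c i j ≤ a i + (fun _ => (0:ℤ)) j := by
      intro i j
      have h1 : c i j ≤ ((c i j).toNat : ℤ) := Int.self_le_toNat _
      have h2 : (c i j).toNat ≤ Finset.univ.sup fun j' => (c i j').toNat :=
        Finset.le_sup (f := fun j' => (c i j').toNat) (Finset.mem_univ j)
      simp only [ha]
      omega
    obtain ⟨a', b', hfeas', hsum'⟩ := KMIntAux.exists_opt c M hMmem hub
      ((∑ i, a i) + (∑ j, (fun _ => (0:ℤ)) j) - M).toNat a (fun _ => 0) hfeas le_rfl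
    exact ⟨a', b', hfeas', hsum'.symm⟩
  · rintro s ⟨a, b, hfeas, rfl⟩
    obtain ⟨σ₀, hσ₀⟩ := hMmem
    exact hσ₀ ▸ KMIntAux.weak_dual c hfeas σ₀
end

section
/- Let c be a real n×n matrix. Then min over permutations σ of ∑_i c_{i,σ(i)} equals max over vectors a, b ∈ ℝ^n with a_i + b_j ≤ c_{ij} for all i,j, of ∑_i a_i + ∑_j b_j. -/
/-!
Weak duality is termwise: `∑ a i + ∑ b j = ∑ (a i + b (σ i)) ≤ ∑ c i (σ i)`. For the converse, fix
an optimal `σ` and the reduced costs `w i j = c i (σ j) - c i (σ i)`. Summed over a cycle of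
indices they give the extra cost of composing `σ` with that cycle, so by optimality there are no
negative cycles, and shortest simple paths yield `q` with `q i ≤ w i j + q j`. Then
`a i = c i (σ i) + q i`, `b (σ j) = -q j` is dual feasible with value `∑ c i (σ i)`.
-/

open Finset

namespace List

variable {α M : Type*}

def pathWeight [AddCommMonoid M] (w : α → α → M) (l : List α) : M :=
  (zipWith w l l.tail).sum

section AddCommMonoid

variable [AddCommMonoid M] (w : α → α → M)

@[simp]
theorem pathWeight_singleton (x : α) : pathWeight w [x] = 0 := rfl

@[simp]
theorem pathWeight_cons_cons (x y : α) (l : List α) :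
    pathWeight w (x :: y :: l) = w x y + pathWeight w (y :: l) := by
  simp [pathWeight]

theorem pathWeight_append_cons (l₁ : List α) (x : α) (l₂ : List α) :
    pathWeight w (l₁ ++ x :: l₂) = pathWeight w (l₁ ++ [x]) + pathWeight w (x :: l₂) := by
  induction l₁ with
  | nil => simp
  | cons y l ih =>
    cases l with
    | nil => simp
    | cons z l => simp_all [add_assoc]

theorem map_formPerm [DecidableEq α] {l : List α} (hl : l.Nodup) :
    l.map l.formPerm = l.rotate 1 :=
  ext_getElem (by simp) fun i _ _ => by simp [formPerm_apply_getElem _ hl, getElem_rotate]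

theorem sum_apply_formPerm_eq_pathWeight [Fintype α] [DecidableEq α] (hw : ∀ y, w y y = 0)
    {x : α} {l : List α} (hl : (x :: l).Nodup) :
    ∑ y, w y ((x :: l).formPerm y) = pathWeight w (x :: l ++ [x]) := by
  rw [← Finset.sum_subset (subset_univ (x :: l).toFinset) fun y _ hy => by
    rw [formPerm_apply_of_notMem (by simpa using hy), hw], sum_toFinset _ hl]
  have : (x :: l).map (fun y => w y ((x :: l).formPerm y)) =
      zipWith w (x :: l) ((x :: l).map (x :: l).formPerm) := by
    rw [zipWith_map_right, zipWith_self]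
  have hzip : zipWith w (x :: (l ++ [x])) (l ++ [x]) = zipWith w (x :: l) (l ++ [x]) := by
    simpa using zipWith_append (f := w) (l₁ := x :: l) (l₂ := l ++ [x]) (l₁' := [x]) (l₂' := [])
      (by simp)
  rw [this, map_formPerm hl]
  simp [pathWeight, hzip]

end AddCommMonoid

theorem exists_potential_of_pathWeight_cycle_nonneg [Finite α] [AddCommMonoid M] [LinearOrder M]
    [IsOrderedAddMonoid M] (w : α → α → M)
    (hw : ∀ x l, (x :: l).Nodup → 0 ≤ pathWeight w (x :: l ++ [x])) :
    ∃ q : α → M, ∀ i j, q i ≤ w i j + q j := by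
  have hfin : ∀ i, {l : List α | (i :: l).Nodup}.Finite := fun i => by
    have := Fintype.ofFinite α
    refine (finite_length_le α (Fintype.card α)).subset fun l hl => ?_
    exact (hl.sublist (sublist_cons_self i l)).length_le_card
  have hshortest : ∀ i, ∃ l, (i :: l).Nodup ∧
      ∀ l', (i :: l').Nodup → pathWeight w (i :: l) ≤ pathWeight w (i :: l') := fun i =>
    Set.exists_min_image _ (fun l => pathWeight w (i :: l)) (hfin i) ⟨[], nodup_singleton i⟩
  choose L hL hmin using hshortest
  refine ⟨fun i => pathWeight w (i :: L i), fun i j => ?_⟩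
  by_cases hi : i ∈ j :: L j
  · obtain ⟨l₁, l₂, hsplit⟩ := append_of_mem hi
    have hnd : (i :: (l₁ ++ l₂)).Nodup := nodup_middle.1 (hsplit ▸ hL j)
    calc pathWeight w (i :: L i)
        ≤ pathWeight w (i :: l₂) := hmin i l₂ (hnd.sublist ((sublist_append_right _ _).cons_cons i))
      _ ≤ pathWeight w (i :: l₁ ++ [i]) + pathWeight w (i :: l₂) :=
        le_add_of_nonneg_left (hw i l₁ (hnd.sublist ((sublist_append_left _ _).cons_cons i)))
      _ = w i j + pathWeight w (j :: L j) := by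
        rw [← pathWeight_cons_cons, hsplit, ← cons_append]
        exact (pathWeight_append_cons w _ i l₂).symm
  · calc pathWeight w (i :: L i) ≤ pathWeight w (i :: j :: L j) :=
        hmin i _ (nodup_cons.2 ⟨hi, hL j⟩)
      _ = w i j + pathWeight w (j :: L j) := pathWeight_cons_cons w i j (L j)

end List

namespace Matrix

variable {ι : Type*} [Fintype ι]

theorem sum_add_sum_le_sum_perm {c : Matrix ι ι ℝ} {a b : ι → ℝ} (h : ∀ i j, a i + b j ≤ c i j)
    (σ : Equiv.Perm ι) : ∑ i, a i + ∑ j, b j ≤ ∑ i, c i (σ i) := by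
  rw [← Equiv.sum_comp σ b, ← sum_add_distrib]
  exact sum_le_sum fun i _ => h i (σ i)

theorem exists_dual_eq_of_forall_sum_perm_le (c : Matrix ι ι ℝ) {σ : Equiv.Perm ι}
    (hσ : ∀ τ : Equiv.Perm ι, ∑ i, c i (σ i) ≤ ∑ i, c i (τ i)) :
    ∃ a b : ι → ℝ, (∀ i j, a i + b j ≤ c i j) ∧ ∑ i, a i + ∑ j, b j = ∑ i, c i (σ i) := by
  classical
  set w : ι → ι → ℝ := fun i j => c i (σ j) - c i (σ i)
  have hcycle : ∀ x l, (x :: l).Nodup → 0 ≤ List.pathWeight w (x :: l ++ [x]) := by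
    intro x l hl
    rw [← List.sum_apply_formPerm_eq_pathWeight w (fun y => sub_self _) hl]
    simpa [w, sum_sub_distrib] using hσ ((x :: l).formPerm.trans σ)
  obtain ⟨q, hq⟩ := List.exists_potential_of_pathWeight_cycle_nonneg w hcycle
  refine ⟨fun i => c i (σ i) + q i, fun j => -q (σ.symm j), fun i j => ?_, ?_⟩
  · have := hq i (σ.symm j)
    simp only [w, Equiv.apply_symm_apply] at this
    linarith
  · rw [Equiv.sum_comp σ.symm fun j => -q j]
    simp [sum_add_distrib]

end Matrix

/-- **Kuhn–Munkres duality, minimization form.** For a real `n × n` matrix `c`, the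
minimal sum of a transversal equals the maximal sum `∑ a i + ∑ b j` over vectors
`a, b` with `a i + b j ≤ c i j` for all `i, j`. -/
theorem kuhn_munkres_min {n : ℕ} (c : Matrix (Fin n) (Fin n) ℝ) :
    ∃ m : ℝ,
      IsLeast {s : ℝ | ∃ σ : Equiv.Perm (Fin n), s = ∑ i, c i (σ i)} m ∧
      IsGreatest {s : ℝ | ∃ a b : Fin n → ℝ, (∀ i j, a i + b j ≤ c i j) ∧
        s = (∑ i, a i) + ∑ j, b j} m := by
  obtain ⟨σ, hσ⟩ := Finite.exists_min fun σ : Equiv.Perm (Fin n) => ∑ i, c i (σ i)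
  obtain ⟨a, b, hab, hsum⟩ := c.exists_dual_eq_of_forall_sum_perm_le hσ
  refine ⟨_, ⟨⟨σ, rfl⟩, ?_⟩, ⟨⟨a, b, hab, hsum.symm⟩, ?_⟩⟩
  · rintro _ ⟨τ, rfl⟩
    exact hσ τ
  · rintro _ ⟨a', b', hab', rfl⟩
    exact Matrix.sum_add_sum_le_sum_perm hab' σ
end

section
/- Let W_1,...,W_r be subspaces of a vector space V over a field. There exist vectors w_1 ∈ W_1, ..., w_r ∈ W_r that are linearly independent if and only if for every subset I ⊆ {1,...,r}, dim(∑_{i∈I} W_i) ≥ |I|. -/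
/-!
Induction on the index set `s`. If some nonempty proper `I₀ ⊂ s` is critical, i.e.
`dim W_{I₀} ≤ |I₀|`, solve the problem on `I₀` by induction and on `s \ I₀` modulo
`U = W_{I₀}`: since `dim (W_J + U) = dim ((W_J + U) / U) + dim U`, the condition for `J ∪ I₀`
yields the condition for `J` in `V / U`. Otherwise every nonempty proper subset has slack at
least one, so one may take any nonzero `w₀ ∈ W_{i₀}` and pass to `V / F w₀`, which costs at most
one dimension. In both cases a transversal of the quotient lifts to `V` and, together with the
vectors chosen inside `U`, stays linearly independent.
-/

open Cardinal Submodule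

section

variable {F V ι : Type*} [Field F] [AddCommGroup V] [Module F V]

theorem Submodule.rank_sup_eq_rank_map_mkQ_add (S U : Submodule F V) :
    Module.rank F ↥(S ⊔ U) = Module.rank F ↥(S.map U.mkQ) + Module.rank F ↥U := by
  set f : ↥(S ⊔ U) →ₗ[F] V ⧸ U := U.mkQ ∘ₗ (S ⊔ U).subtype
  have hrange : LinearMap.range f = S.map U.mkQ := by
    rw [LinearMap.range_comp, range_subtype, map_sup, mkQ_map_self, sup_bot_eq]
  have hker : LinearMap.ker f = comap (S ⊔ U).subtype U := by
    rw [LinearMap.ker_comp, ker_mkQ]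
  rw [← LinearMap.rank_range_add_rank_ker f, hrange, hker,
    (comapSubtypeEquivOfLe le_sup_right).rank_eq]

theorem Submodule.natCast_le_rank_map_mkQ {S U : Submodule F V} {n : ℕ}
    (hU : Module.rank F U < ℵ₀) (h : n + Module.rank F U ≤ Module.rank F ↥(S ⊔ U)) :
    (n : Cardinal) ≤ Module.rank F ↥(S.map U.mkQ) := by
  rw [rank_sup_eq_rank_map_mkQ_add] at h
  exact (add_le_add_iff_of_lt_aleph0 hU).mp h

theorem LinearIndepOn.of_mkQ_diff {U : Submodule F V} {s t : Set ι} {w : ι → V}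
    (hts : t ⊆ s) (hU : ∀ i ∈ t, w i ∈ U) (ht : LinearIndepOn F w t)
    (hst : LinearIndepOn F (U.mkQ ∘ w) (s \ t)) : LinearIndepOn F w s := by
  have hspan : span F (w '' t) ≤ U := span_le.2 (Set.image_subset_iff.2 hU)
  have := ht.union_of_quotient (hst.of_comp ((span F (w '' t)).mapQ U LinearMap.id hspan))
  rwa [Set.union_sdiff_cancel hts] at this

def RadoCondition (W : ι → Submodule F V) (s : Finset ι) : Prop :=
  ∀ I ⊆ s, (I.card : Cardinal) ≤ Module.rank F ↥(⨆ i ∈ I, W i)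

def HasIndepTransversal (W : ι → Submodule F V) (s : Finset ι) : Prop :=
  ∃ w : ι → V, (∀ i ∈ s, w i ∈ W i) ∧ LinearIndepOn F w s

variable {W : ι → Submodule F V} {s : Finset ι}

theorem rank_span_le_one (x : V) : Module.rank F ↥(F ∙ x) ≤ 1 :=
  (rank_span_le _).trans (mk_singleton x).le

theorem RadoCondition.mono {t : Finset ι} (h : RadoCondition W s) (hts : t ⊆ s) :
    RadoCondition W t :=
  fun I hI => h I (hI.trans hts)

theorem RadoCondition.exists_mem_ne_zero {i : ι} (h : RadoCondition W s) (hi : i ∈ s) :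
    ∃ w ∈ W i, w ≠ 0 := by
  have hrank : 1 ≤ Module.rank F ↥(W i) := by
    rw [← Finset.iSup_singleton i W]
    exact_mod_cast h {i} (Finset.singleton_subset_iff.2 hi)
  obtain ⟨x, hx⟩ := rank_pos_iff_exists_ne_zero.mp (zero_lt_one.trans_le hrank)
  exact ⟨x, x.2, by simpa using hx⟩

theorem HasIndepTransversal.radoCondition (h : HasIndepTransversal W s) :
    RadoCondition W s := by
  obtain ⟨w, hw, hli⟩ := h
  intro I hI
  have hmem (i : I) : w i ∈ ⨆ i ∈ I, W i :=
    le_iSup₂ (f := fun i (_ : i ∈ I) => W i) i i.2 (hw i (hI i.2))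
  have hliI : LinearIndependent F fun i : I => (⟨w i, hmem i⟩ : ↥(⨆ i ∈ I, W i)) :=
    .of_comp (⨆ i ∈ I, W i).subtype (hli.mono (Finset.coe_subset.2 hI)).linearIndependent
  simpa using hliI.cardinal_lift_le_rank

theorem radoCondition_map_mkQ {U : Submodule F V} (hU : Module.rank F U < ℵ₀)
    (h : ∀ J ⊆ s, J.card + Module.rank F U ≤ Module.rank F ↥((⨆ i ∈ J, W i) ⊔ U)) :
    RadoCondition (fun i => (W i).map U.mkQ) s := by
  intro J hJ
  have hmap : (⨆ i ∈ J, W i).map U.mkQ = ⨆ i ∈ J, (W i).map U.mkQ := by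
    simp_rw [Submodule.map_iSup]
  rw [← hmap]
  exact natCast_le_rank_map_mkQ hU (h J hJ)

variable [DecidableEq ι]

theorem HasIndepTransversal.of_mkQ {U : Submodule F V} {t : Finset ι} (hts : t ⊆ s)
    (ht : ∃ u : ι → V, (∀ i ∈ t, u i ∈ W i ⊓ U) ∧ LinearIndepOn F u t)
    (hq : HasIndepTransversal (fun i => (W i).map U.mkQ) (s \ t)) :
    HasIndepTransversal W s := by
  obtain ⟨u, hu, hu_li⟩ := ht
  obtain ⟨v, hv, hv_li⟩ := hq
  have hlift : ∀ i, ∃ x, i ∈ s \ t → x ∈ W i ∧ U.mkQ x = v i := fun i => by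
    by_cases hi : i ∈ s \ t
    · obtain ⟨x, hx, hxv⟩ := mem_map.1 (hv i hi)
      exact ⟨x, fun _ => ⟨hx, hxv⟩⟩
    · exact ⟨0, fun h => absurd h hi⟩
  choose x hx using hlift
  refine ⟨t.piecewise u x, fun i hi => ?_, ?_⟩
  · by_cases hit : i ∈ t
    · simpa [hit] using (hu i hit).1
    · simpa [hit] using (hx i (Finset.mem_sdiff.2 ⟨hi, hit⟩)).1
  refine LinearIndepOn.of_mkQ_diff (U := U) (Finset.coe_subset.2 hts)
    (fun i hi => by simpa [Finset.mem_coe.1 hi] using (hu i hi).2) ?_ ?_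
  · exact hu_li.congr fun i hi => by simp [Finset.mem_coe.1 hi]
  · rw [← Finset.coe_sdiff]
    refine hv_li.congr fun i hi => ?_
    have hi' : i ∈ s \ t := by simpa using hi
    simp [(Finset.mem_sdiff.1 hi').2, (hx i hi').2]

theorem RadoCondition.map_mkQ_of_critical {I₀ : Finset ι} (h : RadoCondition W s)
    (hI₀ : I₀ ⊆ s) (hcrit : Module.rank F ↥(⨆ i ∈ I₀, W i) ≤ I₀.card) :
    RadoCondition (fun i => (W i).map (⨆ i ∈ I₀, W i).mkQ) (s \ I₀) := by
  refine radoCondition_map_mkQ (hcrit.trans_lt natCast_lt_aleph0) fun J hJ => ?_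
  have hdisj : Disjoint J I₀ := Finset.disjoint_of_subset_left hJ Finset.sdiff_disjoint
  calc (J.card : Cardinal) + Module.rank F ↥(⨆ i ∈ I₀, W i)
      ≤ J.card + I₀.card := by gcongr
    _ = (J ∪ I₀).card := by rw [Finset.card_union_of_disjoint hdisj, Nat.cast_add]
    _ ≤ Module.rank F ↥(⨆ i ∈ J ∪ I₀, W i) :=
        h _ (Finset.union_subset (hJ.trans Finset.sdiff_subset) hI₀)
    _ = Module.rank F ↥((⨆ i ∈ J, W i) ⊔ ⨆ i ∈ I₀, W i) := by rw [Finset.iSup_union]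

theorem radoCondition_map_mkQ_span_singleton {i₀ : ι}
    (hsub : ∀ J ⊂ s, J.Nonempty → (J.card : Cardinal) < Module.rank F ↥(⨆ i ∈ J, W i))
    (hi₀ : i₀ ∈ s) (w₀ : V) :
    RadoCondition (fun i => (W i).map (F ∙ w₀).mkQ) (s \ {i₀}) := by
  refine radoCondition_map_mkQ ((rank_span_le_one w₀).trans_lt one_lt_aleph0) fun J hJ => ?_
  rcases J.eq_empty_or_nonempty with rfl | hJne
  · simpa using rank_mono le_sup_right
  have hJs : J ⊂ s := Finset.ssubset_of_subset_of_ssubset hJ (Finset.sdiff_ssubset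
    (Finset.singleton_subset_iff.2 hi₀) (Finset.singleton_nonempty i₀))
  calc (J.card : Cardinal) + Module.rank F ↥(F ∙ w₀) ≤ J.card + 1 := by
        gcongr; exact rank_span_le_one w₀
    _ ≤ Module.rank F ↥(⨆ i ∈ J, W i) := add_one_le_of_lt (hsub J hJs hJne)
    _ ≤ Module.rank F ↥((⨆ i ∈ J, W i) ⊔ (F ∙ w₀)) := rank_mono le_sup_left

theorem RadoCondition.hasIndepTransversal (h : RadoCondition W s) : HasIndepTransversal W s := by
  induction s using Finset.strongInduction generalizing V with
  | H s ih =>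
  rcases s.eq_empty_or_nonempty with rfl | ⟨i₀, hi₀⟩
  · exact ⟨0, by simp, by simp⟩
  by_cases hcrit : ∃ I₀ ⊂ s, I₀.Nonempty ∧ Module.rank F ↥(⨆ i ∈ I₀, W i) ≤ I₀.card
  · obtain ⟨I₀, hI₀s, hI₀, hcrit⟩ := hcrit
    obtain ⟨u, hu, hu_li⟩ := ih I₀ hI₀s (h.mono hI₀s.subset)
    refine .of_mkQ hI₀s.subset ⟨u, fun i hi => ⟨hu i hi, ?_⟩, hu_li⟩
      (ih _ (Finset.sdiff_ssubset hI₀s.subset hI₀) (h.map_mkQ_of_critical hI₀s.subset hcrit))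
    exact le_iSup₂ (f := fun i (_ : i ∈ I₀) => W i) i hi (hu i hi)
  · push Not at hcrit
    obtain ⟨w₀, hw₀, hw₀_ne⟩ := h.exists_mem_ne_zero hi₀
    have hi₀s : {i₀} ⊆ s := Finset.singleton_subset_iff.2 hi₀
    refine .of_mkQ (U := F ∙ w₀) hi₀s
      ⟨fun _ => w₀, by simp [hw₀, mem_span_singleton_self], by simpa using hw₀_ne⟩
      (ih _ (Finset.sdiff_ssubset hi₀s (Finset.singleton_nonempty i₀))
        (radoCondition_map_mkQ_span_singleton hcrit hi₀ w₀))

end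

/-- **Rado's theorem (linearized Hall's theorem).** For subspaces `W 1, ..., W r` of a
vector space `V` over a field `F`, a system of linearly independent representatives
`w i ∈ W i` exists if and only if `dim (∑_{i ∈ I} W i) ≥ |I|` for every `I ⊆ [r]`. -/
theorem rado {F V : Type*} [Field F] [AddCommGroup V] [Module F V] {r : ℕ}
    (W : Fin r → Submodule F V) :
    (∃ w : Fin r → V, (∀ i, w i ∈ W i) ∧ LinearIndependent F w) ↔
      ∀ I : Finset (Fin r), (I.card : Cardinal) ≤ Module.rank F ↥(⨆ i ∈ I, W i) := by
  constructor
  · rintro ⟨w, hw, hli⟩ I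
    exact HasIndepTransversal.radoCondition ⟨w, fun i _ => hw i, hli.linearIndepOn _⟩ I le_rfl
  · intro h
    obtain ⟨w, hw, hli⟩ := RadoCondition.hasIndepTransversal (s := .univ) fun I _ => h I
    exact ⟨w, fun i => hw i (Finset.mem_univ i), by simpa using hli⟩
end

section
/- Let K = F((t)) be the field of formal Laurent series over a field F, O = F[[t]], and let L_1,...,L_n be full-rank O-lattices in K^n. Define A(L_1,...,L_n) = min { val(det(v_1,...,v_n)) : v_i ∈ L_i }. For any full-rank lattice L, setting c(L,L_i) = min over generators w of L of min{λ ∈ ℤ : t^λ w ∈ L_i}, one has val(det(L)) + ∑_{i=1}^n c(L,L_i) ≤ A(L_1,...,L_n). -/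
noncomputable section
open scoped Classical

variable {F : Type*} [Field F] {n : ℕ}

/-- `v` is a basis (over `F[[t]]`) of the full-rank lattice `L` in `K^n`, `K = F((t))`. -/
def IsLatticeBasis (L : Submodule (PowerSeries F) (Fin n → LaurentSeries F))
    (v : Fin n → Fin n → LaurentSeries F) : Prop :=
  LinearIndependent (LaurentSeries F) v ∧ L = Submodule.span (PowerSeries F) (Set.range v)

/-- `L` is a full-rank `F[[t]]`-lattice in `K^n`. -/
def IsFullLattice (L : Submodule (PowerSeries F) (Fin n → LaurentSeries F)) : Prop :=
  ∃ v, IsLatticeBasis L v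

/-- `t^λ` as an element of `K = F((t))`. -/
def tpow (lam : ℤ) : LaurentSeries F := HahnSeries.single lam 1

/-- `val (det L) = d` : the valuation of the determinant of an `O`-basis of `L` is `d`. -/
def HasValDet (L : Submodule (PowerSeries F) (Fin n → LaurentSeries F)) (d : ℤ) : Prop :=
  ∃ v, IsLatticeBasis L v ∧ (Matrix.of v).det.order = d

/-- `w` is a generator of `L`: it belongs to some `O`-basis of `L`. -/
def IsGen (L : Submodule (PowerSeries F) (Fin n → LaurentSeries F))
    (w : Fin n → LaurentSeries F) : Prop :=
  ∃ v i, IsLatticeBasis L v ∧ v i = w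

/-- `c(w, M) = lam`, i.e. `lam = min {μ : t^μ • w ∈ M}`. -/
def CVec (w : Fin n → LaurentSeries F) (M : Submodule (PowerSeries F) (Fin n → LaurentSeries F))
    (lam : ℤ) : Prop :=
  IsLeast {μ : ℤ | (tpow μ : LaurentSeries F) • w ∈ M} lam

/-- `c(L, M) = c`, i.e. `c` is the minimum of `c(w,M)` over generators `w` of `L`. -/
def CLat (L M : Submodule (PowerSeries F) (Fin n → LaurentSeries F)) (c : ℤ) : Prop :=
  IsLeast {μ : ℤ | ∃ w, IsGen L w ∧ CVec w M μ} c

/-- `A(L_1, ..., L_n) = a` : the minimum of `val (det (v_1, ..., v_n))` over `v_i ∈ L_i`. -/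
def AIs (Ls : Fin n → Submodule (PowerSeries F) (Fin n → LaurentSeries F)) (a : ℤ) : Prop :=
  IsLeast {d : ℤ | ∃ v : Fin n → Fin n → LaurentSeries F,
    (∀ i, v i ∈ Ls i) ∧ (Matrix.of v).det ≠ 0 ∧ (Matrix.of v).det.order = d} a

/-- `x` lies in `t • L`. -/
def MemTL (L : Submodule (PowerSeries F) (Fin n → LaurentSeries F))
    (x : Fin n → LaurentSeries F) : Prop :=
  ∃ y ∈ L, x = (PowerSeries.X : PowerSeries F) • y

end

/-!
Every nonzero vector `x` of `L_i` lies in `t^{c(L, L_i)} L`: writing `x = t^e u` with `u` a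
generator of `L`, the minimality of `c(L, L_i)` gives `c(L, L_i) ≤ c(u, L_i) ≤ e`. So if
`v_i ∈ L_i` and `det (v_1, ..., v_n) ≠ 0`, the rows `t^{-c(L, L_i)} v_i` lie in `L`, hence form
an `O`-matrix times a basis matrix of `L`, and taking valuations of determinants gives
`val (det v) - ∑ c(L, L_i) ≥ val (det L)`.
-/

open HahnSeries
open scoped LaurentSeries PowerSeries

section Lattices

variable {F : Type*} [Field F] {n : ℕ}

lemma tpow_ne_zero (a : ℤ) : (tpow a : F⸨X⸩) ≠ 0 := single_ne_zero one_ne_zero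

lemma order_tpow (a : ℤ) : (tpow a : F⸨X⸩).order = a := order_single one_ne_zero

lemma tpow_add (a b : ℤ) : (tpow (a + b) : F⸨X⸩) = tpow a * tpow b := by
  simp only [tpow, single_mul_single, one_mul]

lemma tpow_zero : (tpow 0 : F⸨X⸩) = 1 := single_zero_one

lemma tpow_natCast (k : ℕ) : (tpow k : F⸨X⸩) = ((PowerSeries.X ^ k : F⟦X⟧) : F⸨X⸩) :=
  (ofPowerSeries_X_pow k).symm

lemma prod_tpow {ι : Type*} (s : Finset ι) (f : ι → ℤ) :
    ∏ i ∈ s, (tpow (f i) : F⸨X⸩) = tpow (∑ i ∈ s, f i) := by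
  classical
  induction s using Finset.induction_on with
  | empty => simp [tpow_zero]
  | insert i s hi ih => rw [Finset.prod_insert hi, Finset.sum_insert hi, ih, tpow_add]

lemma order_mul_tpow {y : F⸨X⸩} (hy : y ≠ 0) (a : ℤ) : (tpow a * y).order = a + y.order := by
  rw [order_mul (tpow_ne_zero a) hy, order_tpow]

lemma tpow_smul_tpow_smul {M : Type*} [AddCommGroup M] [Module F⸨X⸩ M] (a b : ℤ) (x : M) :
    (tpow a : F⸨X⸩) • (tpow b : F⸨X⸩) • x = (tpow (a + b) : F⸨X⸩) • x := by
  rw [smul_smul, tpow_add]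

lemma smul_eq_coe_smul {M : Type*} [AddCommGroup M] [Module F⸨X⸩ M] [Module F⟦X⟧ M]
    [IsScalarTower F⟦X⟧ F⸨X⸩ M] (p : F⟦X⟧) (x : M) : p • x = (p : F⸨X⸩) • x := by
  rw [← algebraMap_smul F⸨X⸩ p x, LaurentSeries.coe_algebraMap]

lemma order_coe_nonneg (p : F⟦X⟧) : 0 ≤ (p : F⸨X⸩).order := by
  by_contra! hneg
  have hp : (p : F⸨X⸩) ≠ 0 := fun h => by simp [h] at hneg
  apply coeff_order_eq_zero.not.mpr hp
  rw [PowerSeries.coeff_coe, if_pos hneg]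

lemma exists_coe_eq_iff {y : F⸨X⸩} : (∃ p : F⟦X⟧, (p : F⸨X⸩) = y) ↔ 0 ≤ y.order := by
  refine ⟨fun ⟨p, hp⟩ => hp ▸ order_coe_nonneg p, fun hy => ?_⟩
  rcases eq_or_ne y 0 with rfl | h
  · exact ⟨0, map_zero _⟩
  · exact ⟨PowerSeries.X ^ y.order.toNat * y.powerSeriesPart,
      LaurentSeries.X_order_mul_powerSeriesPart (Int.toNat_of_nonneg hy)⟩

lemma isUnit_of_order_coe_eq_zero {p : F⟦X⟧} (hp : (p : F⸨X⸩) ≠ 0) (h0 : (p : F⸨X⸩).order = 0) :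
    IsUnit p := by
  rw [PowerSeries.isUnit_iff_constantCoeff, isUnit_iff_ne_zero,
    ← PowerSeries.coeff_zero_eq_constantCoeff_apply]
  have := coeff_order_eq_zero.not.mpr hp
  rwa [h0, ← Nat.cast_zero, LaurentSeries.coeff_coe_powerSeries] at this

namespace IsLatticeBasis

variable {L : Submodule F⟦X⟧ (Fin n → F⸨X⸩)} {v : Fin n → Fin n → F⸨X⸩}

noncomputable def basis (hv : IsLatticeBasis L v) : Module.Basis (Fin n) F⸨X⸩ (Fin n → F⸨X⸩) :=
  basisOfLinearIndependentOfCardEqFinrank' v hv.1 (by simp)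

@[simp]
lemma coe_basis (hv : IsLatticeBasis L v) : ⇑hv.basis = v :=
  coe_basisOfLinearIndependentOfCardEqFinrank' ..

lemma mem_iff (hv : IsLatticeBasis L v) {x : Fin n → F⸨X⸩} :
    x ∈ L ↔ ∀ j, 0 ≤ (hv.basis.repr x j).order := by
  rw [show x ∈ L ↔ ∃ q : Fin n → F⟦X⟧, ∑ j, q j • v j = x by
    rw [hv.2, Submodule.mem_span_range_iff_exists_fun]]
  constructor
  · rintro ⟨q, rfl⟩ j
    rw [show ∑ j, q j • v j = ∑ j, (q j : F⸨X⸩) • hv.basis j by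
      simp only [smul_eq_coe_smul, hv.coe_basis], hv.basis.repr_sum_self]
    exact order_coe_nonneg _
  · intro hx
    choose q hq using fun j => exists_coe_eq_iff.mpr (hx j)
    refine ⟨q, ?_⟩
    conv_rhs => rw [← hv.basis.sum_repr x]
    simp_rw [smul_eq_coe_smul, hq, hv.coe_basis]

lemma update_of_isUnit (hv : IsLatticeBasis L v) (p : Fin n → F⟦X⟧) {j₀ : Fin n}
    (hp : IsUnit (p j₀)) : IsLatticeBasis L (Function.update v j₀ (∑ j, p j • v j)) := by
  set v' := Function.update v j₀ (∑ j, p j • v j)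
  have hv'_ne : ∀ j ≠ j₀, v' j = v j := fun j hj => Function.update_of_ne hj _ _
  have hv'_self : v' j₀ = ∑ j, p j • v j := Function.update_self _ _ _
  have hspan : Submodule.span F⟦X⟧ (Set.range v') = L := by
    apply le_antisymm
    · refine Submodule.span_le.mpr ?_
      rintro _ ⟨j, rfl⟩
      rcases eq_or_ne j j₀ with rfl | hj
      · rw [hv'_self, hv.2]
        exact Submodule.sum_mem _ fun k _ => Submodule.smul_mem _ _ (Submodule.subset_span ⟨k, rfl⟩)
      · rw [hv'_ne j hj, hv.2]
        exact Submodule.subset_span ⟨j, rfl⟩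
    · rw [hv.2, Submodule.span_le]
      rintro _ ⟨j, rfl⟩
      have hmem : ∀ j ≠ j₀, v j ∈ Submodule.span F⟦X⟧ (Set.range v') := fun j hj =>
        Submodule.subset_span ⟨j, hv'_ne j hj⟩
      rcases ne_or_eq j j₀ with hj | rfl
      · exact hmem j hj
      -- `p j • v j` is `v' j` minus the other summands, and `p j` is a unit
      rw [SetLike.mem_coe, ← Submodule.smul_mem_iff_of_isUnit _ hp,
        eq_sub_of_add_eq (Finset.add_sum_erase _ (fun k => p k • v k) (Finset.mem_univ j)),
        ← hv'_self]
      exact Submodule.sub_mem _ (Submodule.subset_span ⟨j, rfl⟩) (Submodule.sum_mem _ fun k hk =>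
        Submodule.smul_mem _ _ (hmem k (Finset.ne_of_mem_erase hk)))
  refine ⟨linearIndependent_of_top_le_span_of_card_eq_finrank ?_ (by simp), hspan.symm⟩
  rw [← hv.basis.span_eq, hv.coe_basis, Submodule.span_le]
  rintro _ ⟨j, rfl⟩
  exact Submodule.span_le_restrictScalars F⟦X⟧ F⸨X⸩ _ (hspan ▸ hv.2 ▸ Submodule.subset_span ⟨j, rfl⟩)

lemma isGen_of_order_repr_eq_zero (hv : IsLatticeBasis L v) {u : Fin n → F⸨X⸩} (hu : u ∈ L)
    {j₀ : Fin n} (hj₀ : hv.basis.repr u j₀ ≠ 0) (hord : (hv.basis.repr u j₀).order = 0) :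
    IsGen L u := by
  choose q hq using fun j => exists_coe_eq_iff.mpr (hv.mem_iff.mp hu j)
  have hu_eq : u = ∑ j, q j • v j := by
    conv_lhs => rw [← hv.basis.sum_repr u]
    simp_rw [smul_eq_coe_smul, hq, hv.coe_basis]
  have hunit : IsUnit (q j₀) := isUnit_of_order_coe_eq_zero (hq j₀ ▸ hj₀) (hq j₀ ▸ hord)
  exact ⟨_, j₀, hu_eq ▸ hv.update_of_isUnit q hunit, Function.update_self _ _ _⟩

end IsLatticeBasis

lemma IsGen.mem {L : Submodule F⟦X⟧ (Fin n → F⸨X⸩)} {w : Fin n → F⸨X⸩} (hw : IsGen L w) :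
    w ∈ L := by
  obtain ⟨v, i, hv, rfl⟩ := hw
  exact hv.2 ▸ Submodule.subset_span ⟨i, rfl⟩

namespace IsFullLattice

variable {L : Submodule F⟦X⟧ (Fin n → F⸨X⸩)}

-- `e` is the least valuation of the coordinates of `x` in a basis of `L`.
lemma exists_isGen_tpow_smul_eq (hL : IsFullLattice L) {x : Fin n → F⸨X⸩} (hx : x ≠ 0) :
    ∃ e : ℤ, ∃ u, IsGen L u ∧ (tpow e : F⸨X⸩) • u = x := by
  obtain ⟨v, hv⟩ := hL
  set a := hv.basis.repr x
  obtain ⟨j₁, hj₁⟩ := DFunLike.ne_iff.mp ((LinearEquiv.map_ne_zero_iff hv.basis.repr).mpr hx)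
  have hS : a.support.Nonempty := ⟨j₁, Finsupp.mem_support_iff.mpr hj₁⟩
  obtain ⟨j₀, hj₀_mem, he⟩ := a.support.exists_mem_eq_inf' hS fun j => (a j).order
  have hj₀ : a j₀ ≠ 0 := Finsupp.mem_support_iff.mp hj₀_mem
  set e := a.support.inf' hS fun j => (a j).order
  have hrepr : ∀ j, hv.basis.repr ((tpow (-e) : F⸨X⸩) • x) j = tpow (-e) * a j := by
    simp [a]
  refine ⟨e, (tpow (-e) : F⸨X⸩) • x, hv.isGen_of_order_repr_eq_zero (j₀ := j₀) ?_ ?_ ?_, ?_⟩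
  · refine hv.mem_iff.mpr fun j => ?_
    rcases eq_or_ne (a j) 0 with h | h
    · rw [hrepr, h, mul_zero, order_zero]
    · rw [hrepr, order_mul_tpow h]
      have : e ≤ (a j).order := a.support.inf'_le _ (Finsupp.mem_support_iff.mpr h)
      omega
  · exact hrepr j₀ ▸ mul_ne_zero (tpow_ne_zero _) hj₀
  · rw [hrepr, order_mul_tpow hj₀, ← he]
    omega
  · rw [tpow_smul_tpow_smul, add_neg_cancel, tpow_zero, one_smul]

lemma exists_cVec_le {M : Submodule F⟦X⟧ (Fin n → F⸨X⸩)} (hM : IsFullLattice M)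
    {w : Fin n → F⸨X⸩} (hw : w ≠ 0) {μ : ℤ} (hμ : (tpow μ : F⸨X⸩) • w ∈ M) :
    ∃ lam ≤ μ, CVec w M lam := by
  obtain ⟨m, hm⟩ := hM
  obtain ⟨j, hj⟩ := DFunLike.ne_iff.mp ((LinearEquiv.map_ne_zero_iff hm.basis.repr).mpr hw)
  have hbdd : ∀ ν, (tpow ν : F⸨X⸩) • w ∈ M → -(hm.basis.repr w j).order ≤ ν := by
    intro ν hν
    have := hm.mem_iff.mp hν j
    rw [map_smul, Finsupp.smul_apply, smul_eq_mul, order_mul_tpow hj] at this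
    omega
  obtain ⟨lam, hlam, hleast⟩ := Int.exists_least_of_bdd ⟨_, hbdd⟩ ⟨μ, hμ⟩
  exact ⟨lam, hleast μ hμ, hlam, hleast⟩

end IsFullLattice

lemma CLat.tpow_neg_smul_mem {L M : Submodule F⟦X⟧ (Fin n → F⸨X⸩)} {c : ℤ} (hc : CLat L M c)
    (hL : IsFullLattice L) (hM : IsFullLattice M) {x : Fin n → F⸨X⸩} (hx : x ∈ M) (hx0 : x ≠ 0) :
    (tpow (-c) : F⸨X⸩) • x ∈ L := by
  obtain ⟨e, u, hu, rfl⟩ := hL.exists_isGen_tpow_smul_eq hx0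
  have hu0 : u ≠ 0 := by rintro rfl; exact hx0 (smul_zero _)
  obtain ⟨lam, hle, hlam⟩ := hM.exists_cVec_le hu0 hx
  have hc_le : c ≤ lam := hc.2 ⟨u, hu, hlam⟩
  rw [tpow_smul_tpow_smul, show -c + e = ((e - c).toNat : ℤ) by omega, tpow_natCast,
    ← smul_eq_coe_smul]
  exact L.smul_mem _ hu.mem

lemma IsLatticeBasis.order_det_le {L : Submodule F⟦X⟧ (Fin n → F⸨X⸩)} {v : Fin n → Fin n → F⸨X⸩}
    (hv : IsLatticeBasis L v) {u : Fin n → Fin n → F⸨X⸩} (hu : ∀ i, u i ∈ L)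
    (hdet : (Matrix.of u).det ≠ 0) : (Matrix.of v).det.order ≤ (Matrix.of u).det.order := by
  choose B hB using fun i => (Submodule.mem_span_range_iff_exists_fun F⟦X⟧).mp (hv.2 ▸ hu i)
  have hmat : Matrix.of u = (Matrix.of B).map (ofPowerSeries ℤ F) * Matrix.of v := by
    ext i j
    simp [← hB i, Matrix.mul_apply, smul_eq_coe_smul]
  have hdet_eq : (Matrix.of u).det = ((Matrix.of B).det : F⸨X⸩) * (Matrix.of v).det := by
    rw [hmat, Matrix.det_mul, RingHom.map_det, RingHom.mapMatrix_apply]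
  rw [hdet_eq] at hdet ⊢
  rw [order_mul (left_ne_zero_of_mul hdet) (right_ne_zero_of_mul hdet)]
  linarith [order_coe_nonneg (Matrix.of B).det]

end Lattices

theorem valDet_add_sum_c_le_A_general {F : Type*} [Field F] {n : ℕ}
    (Ls : Fin n → Submodule (PowerSeries F) (Fin n → LaurentSeries F))
    (hLs : ∀ i, IsFullLattice (Ls i))
    (L : Submodule (PowerSeries F) (Fin n → LaurentSeries F))
    (dL : ℤ) (hdL : HasValDet L dL)
    (c : Fin n → ℤ) (hc : ∀ i, CLat L (Ls i) (c i))
    (a : ℤ) (ha : AIs Ls a) :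
    dL + ∑ i, c i ≤ a := by
  obtain ⟨w, hwL, hw, rfl⟩ := ha.1
  obtain ⟨v, hv, rfl⟩ := hdL
  have hw0 : ∀ i, w i ≠ 0 := fun i h =>
    hw (Matrix.det_eq_zero_of_row_eq_zero i fun j => congrFun h j)
  have hu : ∀ i, (tpow (-c i) : F⸨X⸩) • w i ∈ L := fun i =>
    (hc i).tpow_neg_smul_mem ⟨v, hv⟩ (hLs i) (hwL i) (hw0 i)
  have hdet : (Matrix.of fun i => (tpow (-c i) : F⸨X⸩) • w i).det
      = tpow (∑ i, -c i) * (Matrix.of w).det := by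
    rw [← prod_tpow, ← Matrix.det_mul_column]
    rfl
  have hle := hv.order_det_le hu (hdet ▸ mul_ne_zero (tpow_ne_zero _) hw)
  rw [hdet, order_mul_tpow hw, Finset.sum_neg_distrib] at hle
  linarith

/-- For full-rank lattices `L_1, ..., L_n` in `K^n` and any full-rank lattice `L`,
`val (det L) + ∑ i, c(L, L_i) ≤ A(L_1, ..., L_n)`, where `A` is the minimal valuation
of `det (v_1, ..., v_n)` over `v_i ∈ L_i`. -/
theorem valDet_add_sum_c_le_A {F : Type*} [Field F] {n : ℕ}
    (Ls : Fin n → Submodule (PowerSeries F) (Fin n → LaurentSeries F))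
    (hLs : ∀ i, IsFullLattice (Ls i))
    (L : Submodule (PowerSeries F) (Fin n → LaurentSeries F)) (hL : IsFullLattice L)
    (dL : ℤ) (hdL : HasValDet L dL)
    (c : Fin n → ℤ) (hc : ∀ i, CLat L (Ls i) (c i))
    (a : ℤ) (ha : AIs Ls a) :
    dL + ∑ i, c i ≤ a :=
  valDet_add_sum_c_le_A_general Ls hLs L dL hdL c hc a ha
end
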